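/- Let d ≥ 1 and let A ⊆ ℤ^d. If lim_{i→∞} d̄(A^{[i]}) = d̄(A) = α > 0, then A is upper thick of level α; that is, for every k ∈ ℕ, the upper density of {z ∈ ℤ^d : z + [-k,k]^d ⊆ A} is at least α. -/

import Mathlib

/-!
Let `B = {z | z + [-k, k]^d ⊆ A}` and fix a block size `n ≥ 2k+1`. A point `a ∈ A \ B` either
lies within `k` of the boundary of its `n`-block (a periodic set of density `1 - (1 - 2k/n)^d`),
or its cube leaves `A` inside the block of `a`, i.e. at a point of `A^{[n]} \ A`. Counting in
`[-m, m]^d` with `C = (2k+1)^d`, and up to boundary effects of the cube,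
`|A| ≤ |B| + (1 - (1 - 2k/n)^d) (2m+1)^d + C (|A^{[n]}| - |A|)`, so
`(1 + C) d̄(A) ≤ d̄(B) + (1 - (1 - 2k/n)^d) + C d̄(A^{[n]})`. Letting `n → ∞`, where
`d̄(A^{[n]}) → d̄(A)`, leaves `d̄(A) ≤ d̄(B)`.
-/

open Filter Pointwise

/-- The `d`-dimensional cube `[-m, m]^d` in `ℤ^d`. -/
def cube (d m : ℕ) : Set (Fin d → ℤ) :=
  Set.Icc (fun _ => -(m : ℤ)) (fun _ => (m : ℤ))

/-- The translated cube `z + [-k, k]^d`. -/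
def cubeAt (d k : ℕ) (z : Fin d → ℤ) : Set (Fin d → ℤ) :=
  Set.Icc (fun i => z i - (k : ℤ)) (fun i => z i + (k : ℤ))

/-- The `n`-block set `A_{[n]} = {x : (n·x + [0, n-1]^d) ∩ A ≠ ∅}`. -/
def blockSet (d : ℕ) (A : Set (Fin d → ℤ)) (n : ℕ) : Set (Fin d → ℤ) :=
  {x | ∃ t ∈ Set.Icc (0 : Fin d → ℤ) (fun _ => (n : ℤ) - 1), (n : ℤ) • x + t ∈ A}

/-- The set `A^{[n]} = n·A_{[n]} + [0, n-1]^d`. -/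
def superBlockSet (d : ℕ) (A : Set (Fin d → ℤ)) (n : ℕ) : Set (Fin d → ℤ) :=
  {w | ∃ x ∈ blockSet d A n,
    ∃ t ∈ Set.Icc (0 : Fin d → ℤ) (fun _ => (n : ℤ) - 1), w = (n : ℤ) • x + t}

/-- Upper asymptotic density of `A ⊆ ℤ^d`. -/
noncomputable def upperDensity (d : ℕ) (A : Set (Fin d → ℤ)) : ℝ :=
  limsup (fun n : ℕ => (Set.ncard (A ∩ cube d n) : ℝ) / (2 * (n : ℝ) + 1) ^ d) atTop

open scoped Topology

theorem Set.ncard_image2_le {α β γ : Type*} (f : α → β → γ) {s : Set α} {t : Set β}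
    (hs : s.Finite) (ht : t.Finite) : (Set.image2 f s t).ncard ≤ s.ncard * t.ncard := by
  rw [← Set.image_uncurry_prod, ← Set.ncard_prod]
  exact Set.ncard_image_le (hs.prod ht)

section Counting

variable {d : ℕ}

theorem ncard_Icc_const (a b : ℤ) :
    (Set.Icc (fun _ : Fin d => a) (fun _ => b)).ncard = (b + 1 - a).toNat ^ d := by
  rw [← Finset.coe_Icc, Set.ncard_coe_finset, Pi.card_Icc]
  simp [Int.card_Icc]

theorem ncard_cube (m : ℕ) : (cube d m).ncard = (2 * m + 1) ^ d := by
  rw [cube, ncard_Icc_const]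
  congr 1
  omega

theorem cube_finite (m : ℕ) : (cube d m).Finite := Set.finite_Icc _ _

theorem inter_cube_finite (S : Set (Fin d → ℤ)) (m : ℕ) : (S ∩ cube d m).Finite :=
  (cube_finite m).inter_of_right S

theorem cube_mono {m m' : ℕ} (h : m ≤ m') : cube d m ⊆ cube d m' := by
  refine Set.Icc_subset_Icc (fun _ => ?_) (fun _ => ?_) <;>
    simp only [neg_le_neg_iff, Nat.cast_le, h]

theorem ncard_inter_cube_add_le (S : Set (Fin d → ℤ)) (m k : ℕ) :
    (S ∩ cube d (m + k)).ncard + (2 * m + 1) ^ d ≤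
      (S ∩ cube d m).ncard + (2 * (m + k) + 1) ^ d := by
  have hsub : S ∩ cube d (m + k) ⊆ (S ∩ cube d m) ∪ (cube d (m + k) \ cube d m) := by
    rintro a ⟨haS, ham⟩
    by_cases h : a ∈ cube d m
    exacts [Or.inl ⟨haS, h⟩, Or.inr ⟨ham, h⟩]
  have hshell := Set.ncard_sdiff_add_ncard_of_subset (cube_mono (Nat.le_add_right m k))
    (cube_finite (d := d) (m + k))
  rw [ncard_cube, ncard_cube] at hshell
  have := (Set.ncard_le_ncard hsub ((inter_cube_finite S m).union
    ((cube_finite _).sdiff))).trans (Set.ncard_union_le _ _)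
  omega

end Counting

section Blocks

variable {d n : ℕ}

/-- The block `n • blockOf n a + [0, n-1]^d` is the one containing `a`. -/
def blockOf (n : ℕ) (a : Fin d → ℤ) : Fin d → ℤ := fun i => a i / n

theorem smul_blockOf_add_emod (n : ℕ) (a : Fin d → ℤ) :
    (n : ℤ) • blockOf n a + (fun i => a i % n) = a := by
  funext i
  exact Int.mul_ediv_add_emod (a i) n

theorem emod_mem_Icc (hn : 0 < n) (a : Fin d → ℤ) :
    (fun i => a i % (n : ℤ)) ∈ Set.Icc (0 : Fin d → ℤ) (fun _ => (n : ℤ) - 1) := by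
  have hn' : (0 : ℤ) < n := Int.natCast_pos.2 hn
  refine ⟨fun i => Int.emod_nonneg _ hn'.ne', fun i => ?_⟩
  have := Int.emod_lt_of_pos (a i) hn'
  simp only
  omega

theorem blockOf_smul_add (hn : 0 < n) (x : Fin d → ℤ) {t : Fin d → ℤ}
    (ht : t ∈ Set.Icc (0 : Fin d → ℤ) (fun _ => (n : ℤ) - 1)) :
    blockOf n ((n : ℤ) • x + t) = x := by
  funext i
  have h0 := ht.1 i
  have h1 := ht.2 i
  refine ((Int.ediv_emod_unique (Int.natCast_pos.2 hn)).2
    ⟨?_, h0, by simp only at h1; omega⟩).1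
  simp only [Pi.add_apply, Pi.smul_apply, smul_eq_mul]
  ring

theorem mem_superBlockSet_iff (hn : 0 < n) {A : Set (Fin d → ℤ)} {w : Fin d → ℤ} :
    w ∈ superBlockSet d A n ↔ blockOf n w ∈ blockSet d A n := by
  constructor
  · rintro ⟨x, hx, t, ht, rfl⟩
    rwa [blockOf_smul_add hn x ht]
  · intro hw
    exact ⟨_, hw, _, emod_mem_Icc hn w, (smul_blockOf_add_emod n w).symm⟩

theorem blockOf_mem_blockSet (hn : 0 < n) {A : Set (Fin d → ℤ)} {a : Fin d → ℤ} (ha : a ∈ A) :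
    blockOf n a ∈ blockSet d A n :=
  ⟨_, emod_mem_Icc hn a, by rwa [smul_blockOf_add_emod]⟩

theorem subset_superBlockSet (hn : 0 < n) (A : Set (Fin d → ℤ)) : A ⊆ superBlockSet d A n :=
  fun _ ha => (mem_superBlockSet_iff hn).2 (blockOf_mem_blockSet hn ha)

/-- Points less than `k` away from the boundary of their `n`-block. -/
def blockBoundary (d k n : ℕ) : Set (Fin d → ℤ) :=
  {a | ∃ i, a i % (n : ℤ) ∉ Set.Icc (k : ℤ) (n - 1 - k)}

theorem blockOf_eq_of_mem_cubeAt (hn : 0 < n) {k : ℕ} {a h : Fin d → ℤ}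
    (ha : a ∉ blockBoundary d k n) (hh : h ∈ cubeAt d k a) : blockOf n h = blockOf n a := by
  funext i
  have hi : k ≤ a i % n ∧ a i % n ≤ n - 1 - k := by
    by_contra hi
    exact ha ⟨i, hi⟩
  have h0 := hh.1 i
  have h1 := hh.2 i
  have hdiv := Int.mul_ediv_add_emod (a i) n
  simp only at h0 h1
  exact ((Int.ediv_emod_unique (a := h i) (q := a i / n) (r := h i - n * (a i / n))
    (Int.natCast_pos.2 hn)).2 ⟨by ring, by linarith, by linarith⟩).1

theorem inter_cube_subset (hn : 0 < n) (A : Set (Fin d → ℤ)) (k m : ℕ) :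
    A ∩ cube d m ⊆ ({z | cubeAt d k z ⊆ A} ∩ cube d m ∪ blockBoundary d k n ∩ cube d m) ∪
      ((superBlockSet d A n \ A) ∩ cube d (m + k) + cube d k) := by
  rintro a ⟨haA, ham⟩
  by_cases hthick : cubeAt d k a ⊆ A
  · exact Or.inl (Or.inl ⟨hthick, ham⟩)
  by_cases hbd : a ∈ blockBoundary d k n
  · exact Or.inl (Or.inr ⟨hbd, ham⟩)
  obtain ⟨h, hh, hhA⟩ := Set.not_subset.mp hthick
  have hsuper : h ∈ superBlockSet d A n := by
    rw [mem_superBlockSet_iff hn, blockOf_eq_of_mem_cubeAt hn hbd hh]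
    exact blockOf_mem_blockSet hn haA
  refine Or.inr ⟨h, ⟨⟨hsuper, hhA⟩, fun i => ?_, fun i => ?_⟩, a - h, ⟨fun i => ?_, fun i => ?_⟩,
    add_sub_cancel h a⟩ <;>
  · have := hh.1 i
    have := hh.2 i
    have := ham.1 i
    have := ham.2 i
    simp only [Pi.sub_apply] at *
    push_cast
    omega

theorem ncard_inter_cube_le (hn : 0 < n) (A : Set (Fin d → ℤ)) (k m : ℕ) :
    (A ∩ cube d m).ncard ≤ ({z | cubeAt d k z ⊆ A} ∩ cube d m).ncard +
      (blockBoundary d k n ∩ cube d m).ncard +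
      ((superBlockSet d A n \ A) ∩ cube d (m + k)).ncard * (2 * k + 1) ^ d := by
  set B := {z | cubeAt d k z ⊆ A} ∩ cube d m
  set E := blockBoundary d k n ∩ cube d m
  set H := (superBlockSet d A n \ A) ∩ cube d (m + k)
  have hH : H.Finite := inter_cube_finite _ _
  have hadd := Set.ncard_image2_le (· + ·) hH (cube_finite (d := d) k)
  rw [Set.image2_add, ncard_cube] at hadd
  have hfin : (B ∪ E ∪ (H + cube d k)).Finite :=
    ((inter_cube_finite _ m).union (inter_cube_finite _ m)).union (hH.add (cube_finite k))
  have hcover : A ∩ cube d m ⊆ B ∪ E ∪ (H + cube d k) := inter_cube_subset hn A k m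
  have := Set.ncard_le_ncard hcover hfin
  have := Set.ncard_union_le (B ∪ E) (H + cube d k)
  have := Set.ncard_union_le B E
  omega

end Blocks

section Boundary

variable {d n : ℕ}

theorem blockOf_mem_Icc (hn : 0 < n) {m : ℕ} {a : Fin d → ℤ} (ha : a ∈ cube d m) :
    blockOf n a ∈ Set.Icc (fun _ => -(m : ℤ) / n) (fun _ => (m : ℤ) / n) :=
  ⟨fun i => Int.ediv_le_ediv (Int.natCast_pos.2 hn) (ha.1 i),
    fun i => Int.ediv_le_ediv (Int.natCast_pos.2 hn) (ha.2 i)⟩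

theorem toNat_ediv_sub_ediv_mul_le (hn : 0 < n) (m : ℕ) :
    ((m : ℤ) / n + 1 - -(m : ℤ) / n).toNat * n ≤ 2 * m + 2 * n := by
  have hn' : (0 : ℤ) < n := Int.natCast_pos.2 hn
  have h1 := Int.mul_ediv_add_emod (m : ℤ) n
  have h2 := Int.mul_ediv_add_emod (-(m : ℤ)) n
  have h3 := Int.emod_nonneg (m : ℤ) hn'.ne'
  have h4 := Int.emod_lt_of_pos (-(m : ℤ)) hn'
  have hle : -(m : ℤ) / n ≤ (m : ℤ) / n := Int.ediv_le_ediv hn' (by omega)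
  zify
  rw [Int.toNat_of_nonneg (by omega)]
  nlinarith

theorem ncard_boundary_residues {k : ℕ} (hkn : 2 * k ≤ n) :
    (Set.Icc (fun _ : Fin d => (0 : ℤ)) (fun _ => (n : ℤ) - 1) \
      Set.Icc (fun _ => (k : ℤ)) (fun _ => (n : ℤ) - 1 - k)).ncard = n ^ d - (n - 2 * k) ^ d := by
  have hsub : Set.Icc (fun _ : Fin d => (k : ℤ)) (fun _ => (n : ℤ) - 1 - k) ⊆
      Set.Icc (fun _ => (0 : ℤ)) (fun _ => (n : ℤ) - 1) :=
    Set.Icc_subset_Icc (fun _ => by simp) (fun _ => by simp only; omega)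
  rw [Set.ncard_sdiff hsub (Set.finite_Icc _ _), ncard_Icc_const, ncard_Icc_const]
  congr 2 <;> omega

theorem ncard_blockBoundary_inter_cube_mul_le (hn : 0 < n) {k : ℕ} (hkn : 2 * k ≤ n) (m : ℕ) :
    (blockBoundary d k n ∩ cube d m).ncard * n ^ d ≤
      (2 * m + 2 * n) ^ d * (n ^ d - (n - 2 * k) ^ d) := by
  set X := Set.Icc (fun _ : Fin d => -(m : ℤ) / n) (fun _ => (m : ℤ) / n)
  set F := Set.Icc (fun _ : Fin d => (0 : ℤ)) (fun _ => (n : ℤ) - 1) \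
    Set.Icc (fun _ => (k : ℤ)) (fun _ => (n : ℤ) - 1 - k)
  have hsub : blockBoundary d k n ∩ cube d m ⊆ Set.image2 (fun x t => (n : ℤ) • x + t) X F := by
    rintro a ⟨⟨i, hi⟩, ham⟩
    exact ⟨_, blockOf_mem_Icc hn ham, _, ⟨emod_mem_Icc hn a, fun hin => hi ⟨hin.1 i, hin.2 i⟩⟩,
      smul_blockOf_add_emod n a⟩
  have hcount := (Set.ncard_le_ncard hsub).trans
    (Set.ncard_image2_le _ (Set.finite_Icc _ _) ((Set.finite_Icc _ _).sdiff))
  rw [ncard_Icc_const, ncard_boundary_residues hkn] at hcount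
  calc (blockBoundary d k n ∩ cube d m).ncard * n ^ d
      ≤ ((m : ℤ) / n + 1 - -(m : ℤ) / n).toNat ^ d * (n ^ d - (n - 2 * k) ^ d) * n ^ d :=
        Nat.mul_le_mul_right _ hcount
    _ = (((m : ℤ) / n + 1 - -(m : ℤ) / n).toNat * n) ^ d * (n ^ d - (n - 2 * k) ^ d) := by ring
    _ ≤ (2 * m + 2 * n) ^ d * (n ^ d - (n - 2 * k) ^ d) := by
        gcongr
        exact toNat_ediv_sub_ediv_mul_le hn m

end Boundary

theorem tendsto_two_mul_add_div_pow (d : ℕ) (c : ℝ) :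
    Tendsto (fun m : ℕ => ((2 * m + c) / (2 * m + 1)) ^ d) atTop (𝓝 1) := by
  have hden : Tendsto (fun m : ℕ => 2 * (m : ℝ) + 1) atTop atTop :=
    tendsto_atTop_add_const_right _ 1 (tendsto_natCast_atTop_atTop.const_mul_atTop two_pos)
  have hfrac := (tendsto_const_nhds (x := c - 1)).div_atTop hden
  have hpow := (hfrac.const_add 1).pow d
  rw [add_zero, one_pow] at hpow
  refine hpow.congr fun m => ?_
  congr 1
  field_simp
  ring

theorem one_add_mul_limsup_le {ι : Type*} {f : Filter ι} {a b s g : ι → ℝ} {c δ : ℝ}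
    (hc : 0 ≤ c) (ha : IsCoboundedUnder (· ≤ ·) f a) (hb : IsBoundedUnder (· ≤ ·) f b)
    (hs : IsBoundedUnder (· ≤ ·) f s) (hg : Tendsto g f (𝓝 δ))
    (h : ∀ᶠ i in f, (1 + c) * a i ≤ b i + c * s i + g i) :
    (1 + c) * limsup a f ≤ limsup b f + c * limsup s f + δ := by
  have key : ∀ ε > 0, (1 + c) * limsup a f ≤ limsup b f + c * limsup s f + δ + (2 + 2 * c) * ε := by
    intro ε hε
    have hfreq := (frequently_lt_of_lt_limsup ha (sub_lt_self (limsup a f) hε)).and_eventually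
      ((eventually_lt_of_limsup_lt (lt_add_of_pos_right (limsup s f) hε) hs).and
        ((hg.eventually_lt_const (lt_add_of_pos_right δ hε)).and h))
    have hlow : (1 + c) * (limsup a f - ε) - c * (limsup s f + ε) - (δ + ε) ≤ limsup b f := by
      refine le_limsup_of_frequently_le (hfreq.mono fun i ⟨hai, hsi, hgi, hi⟩ => ?_) hb
      nlinarith
    linarith
  refine le_of_forall_pos_le_add fun ε hε => ?_
  have := key (ε / (2 + 2 * c)) (by positivity)
  rwa [mul_div_cancel₀ _ (by positivity)] at this

section Density

variable {d n : ℕ}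

noncomputable def cubeDensity (d : ℕ) (S : Set (Fin d → ℤ)) (m : ℕ) : ℝ :=
  (S ∩ cube d m).ncard / (2 * (m : ℝ) + 1) ^ d

theorem upperDensity_eq_limsup (S : Set (Fin d → ℤ)) :
    upperDensity d S = limsup (cubeDensity d S) atTop := rfl

theorem cubeDensity_nonneg (S : Set (Fin d → ℤ)) (m : ℕ) : 0 ≤ cubeDensity d S m := by
  unfold cubeDensity
  positivity

theorem cubeDensity_le_one (S : Set (Fin d → ℤ)) (m : ℕ) : cubeDensity d S m ≤ 1 := by
  rw [cubeDensity, div_le_one (by positivity)]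
  have := Set.ncard_le_ncard Set.inter_subset_right (cube_finite (d := d) m) (s := S ∩ cube d m)
  rw [ncard_cube] at this
  exact_mod_cast this

theorem isBoundedUnder_le_cubeDensity (S : Set (Fin d → ℤ)) :
    IsBoundedUnder (· ≤ ·) atTop (cubeDensity d S) :=
  isBoundedUnder_of ⟨1, cubeDensity_le_one S⟩

theorem isCoboundedUnder_le_cubeDensity (S : Set (Fin d → ℤ)) :
    IsCoboundedUnder (· ≤ ·) atTop (cubeDensity d S) :=
  (isBoundedUnder_of ⟨0, cubeDensity_nonneg S⟩).isCoboundedUnder_le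

-- `|A|` is moved to the left because a `limsup` of a difference cannot be split.
theorem one_add_mul_cubeDensity_le (hn : 0 < n) (A : Set (Fin d → ℤ)) (k m : ℕ) :
    (1 + (2 * (k : ℝ) + 1) ^ d) * cubeDensity d A m ≤
      cubeDensity d {z | cubeAt d k z ⊆ A} m +
        (2 * (k : ℝ) + 1) ^ d * cubeDensity d (superBlockSet d A n) m +
        (cubeDensity d (blockBoundary d k n) m +
          (2 * (k : ℝ) + 1) ^ d * (((2 * m + (2 * k + 1)) / (2 * m + 1)) ^ d - 1)) := by
  set H := superBlockSet d A n \ A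
  have hcount : ((A ∩ cube d m).ncard : ℝ) ≤ ({z | cubeAt d k z ⊆ A} ∩ cube d m).ncard +
      (blockBoundary d k n ∩ cube d m).ncard + (H ∩ cube d (m + k)).ncard * (2 * k + 1) ^ d := by
    exact_mod_cast ncard_inter_cube_le hn A k m
  have hshell : ((H ∩ cube d (m + k)).ncard : ℝ) + (2 * m + 1) ^ d ≤
      (H ∩ cube d m).ncard + (2 * (m + k) + 1) ^ d := by
    exact_mod_cast ncard_inter_cube_add_le H m k
  have hsplit : ((H ∩ cube d m).ncard : ℝ) + (A ∩ cube d m).ncard =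
      (superBlockSet d A n ∩ cube d m).ncard := by
    rw [Set.inter_sdiff_distrib_right]
    exact_mod_cast Set.ncard_sdiff_add_ncard_of_subset
      (Set.inter_subset_inter_left _ (subset_superBlockSet hn A)) (inter_cube_finite _ _)
  have hP : (0 : ℝ) < (2 * m + 1) ^ d := by positivity
  have hC : (0 : ℝ) ≤ (2 * k + 1) ^ d := by positivity
  simp only [cubeDensity, div_pow]
  have hkey : 0 ≤ ({z | cubeAt d k z ⊆ A} ∩ cube d m).ncard +
      (2 * (k : ℝ) + 1) ^ d * (superBlockSet d A n ∩ cube d m).ncard +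
      ((blockBoundary d k n ∩ cube d m).ncard +
        (2 * (k : ℝ) + 1) ^ d * ((2 * m + (2 * k + 1)) ^ d - (2 * m + 1) ^ d)) -
      (1 + (2 * (k : ℝ) + 1) ^ d) * (A ∩ cube d m).ncard := by
    rw [← hsplit]
    linear_combination hcount + mul_le_mul_of_nonneg_left hshell hC
  refine sub_nonneg.1 ((div_nonneg hkey hP.le).trans_eq ?_)
  field_simp


theorem cubeDensity_blockBoundary_le (hn : 0 < n) {k : ℕ} (hkn : 2 * k ≤ n) (m : ℕ) :
    cubeDensity d (blockBoundary d k n) m ≤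
      ((2 * (m : ℝ) + 2 * n) / (2 * m + 1)) ^ d * (1 - (1 - 2 * (k : ℝ) / n) ^ d) := by
  have hcount := ncard_blockBoundary_inter_cube_mul_le (d := d) hn hkn m
  have hpow : (n - 2 * k) ^ d ≤ n ^ d := Nat.pow_le_pow_left (Nat.sub_le n _) d
  have hcount' : ((blockBoundary d k n ∩ cube d m).ncard : ℝ) * n ^ d ≤
      (2 * m + 2 * n) ^ d * (n ^ d - (n - 2 * k) ^ d) := by
    have := (Nat.cast_le (α := ℝ)).2 hcount
    push_cast [Nat.cast_sub hpow, Nat.cast_sub hkn] at this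
    exact this
  have hn' : (0 : ℝ) < n := by exact_mod_cast hn
  have hP : (0 : ℝ) < (2 * m + 1) ^ d := by positivity
  have hrw : (1 : ℝ) - (1 - 2 * k / n) ^ d = (n ^ d - (n - 2 * k) ^ d) / n ^ d := by
    field_simp
    rw [sub_mul, div_pow, div_mul_cancel₀ _ (by positivity), one_mul]
  rw [cubeDensity, hrw, div_pow, div_mul_div_comm, div_le_div_iff₀ hP (by positivity)]
  nlinarith

theorem one_add_mul_upperDensity_le (hn : 0 < n) {k : ℕ} (hkn : 2 * k ≤ n)
    (A : Set (Fin d → ℤ)) :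
    (1 + (2 * (k : ℝ) + 1) ^ d) * upperDensity d A ≤
      upperDensity d {z | cubeAt d k z ⊆ A} +
        (2 * (k : ℝ) + 1) ^ d * upperDensity d (superBlockSet d A n) +
        (1 - (1 - 2 * (k : ℝ) / n) ^ d) := by
  have herr := ((tendsto_two_mul_add_div_pow d (2 * n)).mul_const
    (1 - (1 - 2 * (k : ℝ) / n) ^ d)).add
    (((tendsto_two_mul_add_div_pow d (2 * k + 1)).sub_const 1).const_mul ((2 * (k : ℝ) + 1) ^ d))
  rw [one_mul, sub_self, mul_zero, add_zero] at herr
  simp only [upperDensity_eq_limsup]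
  refine one_add_mul_limsup_le (by positivity) (isCoboundedUnder_le_cubeDensity A)
    (isBoundedUnder_le_cubeDensity _) (isBoundedUnder_le_cubeDensity _) herr
    (Eventually.of_forall fun m => ?_)
  have := one_add_mul_cubeDensity_le hn A k m
  have := cubeDensity_blockBoundary_le (d := d) hn hkn m
  linarith

end Density

theorem stmt_6_general (d : ℕ) (A : Set (Fin d → ℤ)) (α : ℝ)
    (hlim : Tendsto (fun i : ℕ => upperDensity d (superBlockSet d A i)) atTop (nhds α))
    (hA : upperDensity d A = α) :
    ∀ k : ℕ, α ≤ upperDensity d {z : Fin d → ℤ | cubeAt d k z ⊆ A} := by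
  intro k
  have hboundary : Tendsto (fun n : ℕ => 1 - (1 - 2 * (k : ℝ) / n) ^ d) atTop (𝓝 0) := by
    have := ((tendsto_const_div_atTop_nhds_zero_nat (2 * (k : ℝ))).const_sub 1).pow d
    simpa using this.const_sub 1
  have hbound : ∀ᶠ n : ℕ in atTop, (1 + (2 * (k : ℝ) + 1) ^ d) * α ≤
      upperDensity d {z | cubeAt d k z ⊆ A} +
        (2 * (k : ℝ) + 1) ^ d * upperDensity d (superBlockSet d A n) +
        (1 - (1 - 2 * (k : ℝ) / n) ^ d) := by
    filter_upwards [eventually_ge_atTop (2 * k + 1)] with n hn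
    exact hA ▸ one_add_mul_upperDensity_le (by omega) (by omega) A
  have hlimit := ge_of_tendsto ((tendsto_const_nhds.add (hlim.const_mul _)).add hboundary) hbound
  linarith

theorem stmt_6 (d : ℕ) (hd : 1 ≤ d) (A : Set (Fin d → ℤ)) (α : ℝ)
    (hlim : Tendsto (fun i : ℕ => upperDensity d (superBlockSet d A i)) atTop (nhds α))
    (hA : upperDensity d A = α) (hα : 0 < α) :
    ∀ k : ℕ, α ≤ upperDensity d {z : Fin d → ℤ | cubeAt d k z ⊆ A} :=
  stmt_6_general d A α hlim hA
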